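/- Let X and Y be types, let Z = {CP, NC}, and let S = ((x_1,y_1,z_1),…,(x_m,y_m,z_m)) be a sample of size m ≥ 1 in X × Y × Z. For any two hypotheses o, o' : X → Y, define the symmetric-difference classifier c' : X → Z by c'(x) = NC if o(x) ≠ o'(x) and c'(x) = CP otherwise. Then the empirical cooperation-identification error of c' satisfies ĉer_S(c') ≤ p̂_S + ôer_S(o) − Δ_S(o'). -/

import Mathlib

open scoped Classical

/-- Cooperation labels: `CP` (cooperative) and `NC` (non-cooperative). -/
inductive Coop : Type
  | CP : Coop
  | NC : Coop
deriving DecidableEq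

/-- Empirical object-identification error of `o` on the sample `s`. -/
noncomputable def oer {X Y : Type*} {m : ℕ} (o : X → Y) (s : Fin m → X × Y × Coop) : ℝ :=
  ((Finset.univ.filter fun i => o (s i).1 ≠ (s i).2.1).card : ℝ) / m

/-- Empirical cooperation-identification error of `c` on the sample `s`. -/
noncomputable def cer {X Y : Type*} {m : ℕ} (c : X → Coop) (s : Fin m → X × Y × Coop) : ℝ :=
  ((Finset.univ.filter fun i => c (s i).1 ≠ (s i).2.2).card : ℝ) / m

/-- Empirical non-cooperation frequency of the sample `s`. -/
noncomputable def pNC {X Y : Type*} {m : ℕ} (s : Fin m → X × Y × Coop) : ℝ :=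
  ((Finset.univ.filter fun i => (s i).2.2 = Coop.NC).card : ℝ) / m

/-- Cooperation gap of `o` on the sample `s`:
`(1/m)·#{i : z_i = NC ∧ o(x_i) ≠ y_i} − (1/m)·#{i : z_i = CP ∧ o(x_i) ≠ y_i}`. -/
noncomputable def gap {X Y : Type*} {m : ℕ} (o : X → Y) (s : Fin m → X × Y × Coop) : ℝ :=
  ((Finset.univ.filter fun i => (s i).2.2 = Coop.NC ∧ o (s i).1 ≠ (s i).2.1).card : ℝ) / m
    - ((Finset.univ.filter fun i => (s i).2.2 = Coop.CP ∧ o (s i).1 ≠ (s i).2.1).card : ℝ) / m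

/-- For any hypotheses `o, o'`, the symmetric-difference classifier
`c'(x) = NC if o(x) ≠ o'(x) else CP` satisfies
`ĉer_S(c') ≤ p̂_S + ôer_S(o) − Δ_S(o')`. -/
theorem cer_symmDiff_le {X Y : Type*} {m : ℕ} (hm : 1 ≤ m)
    (s : Fin m → X × Y × Coop) (o o' : X → Y) :
    cer (fun x => if o x ≠ o' x then Coop.NC else Coop.CP) s
      ≤ pNC s + oer o s - gap o' s := by
  have hm' : (0:ℝ) < m := by exact_mod_cast Nat.lt_of_lt_of_le Nat.zero_lt_one hm
  unfold cer pNC oer gap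
  rw [← add_div, ← sub_div, ← sub_div, div_le_div_iff_of_pos_right hm']
  have key : ∀ i : Fin m,
      (if (if o (s i).1 ≠ o' (s i).1 then Coop.NC else Coop.CP) ≠ (s i).2.2 then (1:ℝ) else 0)
      ≤ ((if (s i).2.2 = Coop.NC then (1:ℝ) else 0)
        + (if (s i).2.2 = Coop.CP ∧ o' (s i).1 ≠ (s i).2.1 then (1:ℝ) else 0))
        + (if o (s i).1 ≠ (s i).2.1 then (1:ℝ) else 0)
        - (if (s i).2.2 = Coop.NC ∧ o' (s i).1 ≠ (s i).2.1 then (1:ℝ) else 0) := by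
    intro i
    rcases hz : (s i).2.2 with _ | _ <;> split_ifs <;> simp_all
  calc ((Finset.univ.filter fun i =>
        (if o (s i).1 ≠ o' (s i).1 then Coop.NC else Coop.CP) ≠ (s i).2.2).card : ℝ)
      = ∑ i : Fin m, (if (if o (s i).1 ≠ o' (s i).1 then Coop.NC else Coop.CP) ≠ (s i).2.2
          then (1:ℝ) else 0) := by rw [Finset.sum_boole]
    _ ≤ ∑ i : Fin m, (((if (s i).2.2 = Coop.NC then (1:ℝ) else 0)
          + (if (s i).2.2 = Coop.CP ∧ o' (s i).1 ≠ (s i).2.1 then (1:ℝ) else 0))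
          + (if o (s i).1 ≠ (s i).2.1 then (1:ℝ) else 0)
          - (if (s i).2.2 = Coop.NC ∧ o' (s i).1 ≠ (s i).2.1 then (1:ℝ) else 0)) :=
        Finset.sum_le_sum fun i _ => key i
    _ = _ := by
        simp only [Finset.sum_sub_distrib, Finset.sum_add_distrib, Finset.sum_boole]; ring
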